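/- If X is a star Menger space and Y is a σ-compact space, then X × Y is star Menger. -/
import Mathlib


open Set

/-- The star of a set `A` with respect to a family `𝒰`: the union of all members of `𝒰`
meeting `A`. -/
def star' {X : Type*} (A : Set X) (𝒰 : Set (Set X)) : Set X :=
  ⋃₀ {u ∈ 𝒰 | (u ∩ A).Nonempty}

/-- A subset `M` of a space is Menger (as a subspace), expressed relatively: for every
sequence of covers of `M` by open subsets of `X` there are finite subfamilies whose
union covers `M`. -/
def MengerSet {X : Type*} [TopologicalSpace X] (M : Set X) : Prop :=
  ∀ 𝒰 : ℕ → Set (Set X), (∀ n, ∀ u ∈ 𝒰 n, IsOpen u) → (∀ n, M ⊆ ⋃₀ 𝒰 n) →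
    ∃ 𝒱 : ℕ → Set (Set X), (∀ n, 𝒱 n ⊆ 𝒰 n ∧ (𝒱 n).Finite) ∧ M ⊆ ⋃ n, ⋃₀ 𝒱 n

/-- A space `X` is Menger. -/
def MengerSpace (X : Type*) [TopologicalSpace X] : Prop :=
  ∀ 𝒰 : ℕ → Set (Set X), (∀ n, (∀ u ∈ 𝒰 n, IsOpen u) ∧ ⋃₀ 𝒰 n = univ) →
    ∃ 𝒱 : ℕ → Set (Set X), (∀ n, 𝒱 n ⊆ 𝒰 n ∧ (𝒱 n).Finite) ∧ ⋃ n, ⋃₀ 𝒱 n = univ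

/-- A space `X` is star Menger: every open cover has a Menger star kernel. -/
def StarMenger (X : Type*) [TopologicalSpace X] : Prop :=
  ∀ 𝒰 : Set (Set X), (∀ u ∈ 𝒰, IsOpen u) → ⋃₀ 𝒰 = univ →
    ∃ M : Set X, MengerSet M ∧ star' M 𝒰 = univ

/-- Strong tube lemma: around a point `x` whose slice `{x} ×ˢ K` is covered by `𝒰`,
there is an open `W ∋ x` and a finite `F ⊆ 𝒰` such that for each `y ∈ K` some single
member of `F` contains the whole strip `W ×ˢ {y}`. -/
lemma tube_lemma' {X Y : Type*} [TopologicalSpace X] [TopologicalSpace Y]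
    {𝒰 : Set (Set (X × Y))} (ho : ∀ u ∈ 𝒰, IsOpen u) {K : Set Y} (hK : IsCompact K)
    (x : X) (hc : ∀ y ∈ K, ∃ u ∈ 𝒰, (x, y) ∈ u) :
    ∃ W : Set X, ∃ F : Set (Set (X × Y)), IsOpen W ∧ x ∈ W ∧ F ⊆ 𝒰 ∧ F.Finite ∧
      ∀ y ∈ K, ∃ u ∈ F, ∀ x' ∈ W, (x', y) ∈ u := by
  have h : ∀ y : Y, ∃ A : Set X, ∃ B : Set Y, ∃ u : Set (X × Y), IsOpen B ∧
      (y ∈ K → u ∈ 𝒰 ∧ IsOpen A ∧ x ∈ A ∧ y ∈ B ∧ A ×ˢ B ⊆ u) := by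
    intro y
    by_cases hy : y ∈ K
    · obtain ⟨u, hu, hxy⟩ := hc y hy
      obtain ⟨A, B, hA, hB, hxA, hyB, hAB⟩ := (isOpen_prod_iff.mp (ho u hu)) x y hxy
      exact ⟨A, B, u, hB, fun _ => ⟨hu, hA, hxA, hyB, hAB⟩⟩
    · exact ⟨univ, univ, ∅, isOpen_univ, fun h => absurd h hy⟩
  choose A B u hB h using h
  obtain ⟨t, htK, htfin, htcov⟩ := hK.elim_finite_subcover_image
    (fun y (_ : y ∈ K) => hB y) (fun y hy => mem_biUnion hy (h y hy).2.2.2.1)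
  refine ⟨⋂ y ∈ t, A y, u '' t, ?_, ?_, ?_, htfin.image u, ?_⟩
  · exact htfin.isOpen_biInter (fun y hy => (h y (htK hy)).2.1)
  · exact mem_iInter₂.mpr (fun y hy => (h y (htK hy)).2.2.1)
  · rintro _ ⟨y, hy, rfl⟩; exact (h y (htK hy)).1
  · intro y hyK
    obtain ⟨y', hy't, hyB⟩ := mem_iUnion₂.mp (htcov hyK)
    refine ⟨u y', mem_image_of_mem _ hy't, fun x' hx' => (h y' (htK hy't)).2.2.2.2 ?_⟩
    exact mk_mem_prod (mem_iInter₂.mp hx' y' hy't) hyB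

/-- The product of a Menger subset with a compact set is Menger. -/
lemma mengerSet_prod {X Y : Type*} [TopologicalSpace X] [TopologicalSpace Y]
    {N : Set X} {K : Set Y} (hN : MengerSet N) (hK : IsCompact K) :
    MengerSet (N ×ˢ K) := by
  rcases isEmpty_or_nonempty X with hX | hX
  · intro 𝒰 _ _
    exact ⟨fun _ => ∅, fun n => ⟨empty_subset _, finite_empty⟩,
      fun p hp => (IsEmpty.false p.1).elim⟩
  intro 𝒰 ho hcov
  have h : ∀ n : ℕ, ∀ x : X, ∃ W : Set X, ∃ F : Set (Set (X × Y)), IsOpen W ∧ x ∈ W ∧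
      (x ∈ N → F ⊆ 𝒰 n ∧ F.Finite ∧ ∀ y ∈ K, ∃ u ∈ F, ∀ x' ∈ W, (x', y) ∈ u) := by
    intro n x
    by_cases hx : x ∈ N
    · obtain ⟨W, F, h1, h2, h3, h4, h5⟩ := tube_lemma' (ho n) hK x
        (fun y hy => hcov n (mk_mem_prod hx hy))
      exact ⟨W, F, h1, h2, fun _ => ⟨h3, h4, h5⟩⟩
    · exact ⟨univ, ∅, isOpen_univ, mem_univ x, fun h => absurd h hx⟩
  choose W F hWo hxW hP using h
  obtain ⟨𝒱', h𝒱'1, h𝒱'2⟩ := hN (fun n => W n '' N)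
    (by rintro n _ ⟨x, hx, rfl⟩; exact hWo n x)
    (fun n a ha => ⟨W n a, mem_image_of_mem _ ha, hxW n a⟩)
  have hg : ∀ n : ℕ, ∀ w : Set X, ∃ x : X, w ∈ 𝒱' n → x ∈ N ∧ W n x = w := by
    intro n w
    by_cases hw : w ∈ 𝒱' n
    · obtain ⟨x, hx, rfl⟩ := (h𝒱'1 n).1 hw
      exact ⟨x, fun _ => ⟨hx, rfl⟩⟩
    · exact ⟨Classical.arbitrary X, fun h => absurd h hw⟩
  choose g hg using hg
  refine ⟨fun n => ⋃ w ∈ 𝒱' n, F n (g n w), fun n => ⟨?_, ?_⟩, ?_⟩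
  · rintro u hu
    obtain ⟨w, hw, hu⟩ := mem_iUnion₂.mp hu
    exact (hP n (g n w) (hg n w hw).1).1 hu
  · exact (h𝒱'1 n).2.biUnion (fun w hw => (hP n (g n w) (hg n w hw).1).2.1)
  · rintro ⟨a, b⟩ ⟨haN, hbK⟩
    obtain ⟨n, w, hw, haw⟩ := by
      have := h𝒱'2 haN
      simpa only [mem_iUnion, mem_sUnion] using this
    obtain ⟨hgN, hgw⟩ := hg n w hw
    have haW : a ∈ W n (g n w) := by rw [hgw]; exact haw
    obtain ⟨u, huF, hu⟩ := (hP n (g n w) hgN).2.2 b hbK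
    exact mem_iUnion.mpr ⟨n, u, mem_iUnion₂.mpr ⟨w, hw, huF⟩, hu a haW⟩

/-- A countable union of Menger subsets is Menger. -/
lemma mengerSet_iUnion {X : Type*} [TopologicalSpace X] {M : ℕ → Set X}
    (h : ∀ k, MengerSet (M k)) : MengerSet (⋃ k, M k) := by
  intro 𝒰 ho hcov
  have hk : ∀ k, ∃ 𝒱 : ℕ → Set (Set X), (∀ n, 𝒱 n ⊆ 𝒰 (Nat.pair k n) ∧ (𝒱 n).Finite) ∧
      M k ⊆ ⋃ n, ⋃₀ 𝒱 n :=
    fun k => h k (fun n => 𝒰 (Nat.pair k n)) (fun n => ho _)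
      (fun n => (subset_iUnion M k).trans (hcov _))
  choose 𝒱 h1 h2 using hk
  refine ⟨fun m => 𝒱 m.unpair.1 m.unpair.2, fun m => ?_, ?_⟩
  · have := h1 m.unpair.1 m.unpair.2
    rwa [Nat.pair_unpair] at this
  · rintro a ha
    obtain ⟨k, hk⟩ := mem_iUnion.mp ha
    obtain ⟨n, hn⟩ := mem_iUnion.mp (h2 k hk)
    refine mem_iUnion.mpr ⟨Nat.pair k n, ?_⟩
    simpa [Nat.unpair_pair] using hn

/-- Key lemma: star kernel over a compact slab. -/
lemma star_key {X Y : Type*} [TopologicalSpace X] [TopologicalSpace Y]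
    (hX : StarMenger X) {K : Set Y} (hK : IsCompact K)
    {𝒰 : Set (Set (X × Y))} (ho : ∀ u ∈ 𝒰, IsOpen u) (hc : ⋃₀ 𝒰 = univ) :
    ∃ M : Set (X × Y), MengerSet M ∧ univ ×ˢ K ⊆ star' M 𝒰 := by
  have h : ∀ x : X, ∃ W : Set X, ∃ F : Set (Set (X × Y)), IsOpen W ∧ x ∈ W ∧ F ⊆ 𝒰 ∧
      F.Finite ∧ ∀ y ∈ K, ∃ u ∈ F, ∀ x' ∈ W, (x', y) ∈ u := by
    intro x
    refine tube_lemma' ho hK x (fun y _ => ?_)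
    have : (x, y) ∈ ⋃₀ 𝒰 := hc ▸ mem_univ _
    exact this
  choose W F hWo hxW hF hFfin hprop using h
  obtain ⟨N, hN, hstar⟩ := hX (range W)
    (by rintro _ ⟨x, rfl⟩; exact hWo x)
    (eq_univ_of_forall (fun x => ⟨W x, mem_range_self x, hxW x⟩))
  refine ⟨N ×ˢ K, mengerSet_prod hN hK, ?_⟩
  rintro ⟨x, y⟩ ⟨-, hyK⟩
  have hx : x ∈ star' N (range W) := hstar ▸ mem_univ x
  obtain ⟨w, ⟨⟨z, rfl⟩, a, haw, haN⟩, hxw⟩ := hx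
  obtain ⟨u, huF, hu⟩ := hprop z y hyK
  exact ⟨u, ⟨hF z huF, ⟨(a, y), hu a haw, mk_mem_prod haN hyK⟩⟩, hu x hxw⟩

/-- If `X` is star Menger and `Y` is σ-compact, then `X × Y` is star Menger. -/
theorem stmt15 {X Y : Type*} [TopologicalSpace X] [TopologicalSpace Y]
    (hX : StarMenger X) [SigmaCompactSpace Y] : StarMenger (X × Y) := by
  intro 𝒰 ho hc
  have key : ∀ n, ∃ M : Set (X × Y), MengerSet M ∧
      univ ×ˢ (compactCovering Y n) ⊆ star' M 𝒰 :=
    fun n => star_key hX (isCompact_compactCovering Y n) ho hc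
  choose M hM hMs using key
  refine ⟨⋃ n, M n, mengerSet_iUnion hM, eq_univ_of_forall ?_⟩
  rintro ⟨x, y⟩
  obtain ⟨n, hn⟩ := exists_mem_compactCovering y
  obtain ⟨u, ⟨hu𝒰, a, hau, haM⟩, hxu⟩ := hMs n (mk_mem_prod (mem_univ x) hn)
  exact ⟨u, ⟨hu𝒰, a, hau, mem_iUnion.mpr ⟨n, haM⟩⟩, hxu⟩
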